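/- arXiv:1704.08984 — 5 statements merged into one kernel-verified Lean document; each statement's English description precedes it below -/
import Mathlib

section
/- Let A be a contraction on a Hilbert space H with defect spaces D_A = closure of range(I − A*A) and D_{A*} = closure of range(I − AA*), with orthogonal projections P_{D_A} and P_{D_{A*}}. A bounded operator T on H satisfies ⟨Tx, y⟩ = ⟨TAx, Ay⟩ for all x, y ∈ ker(I − A*A) if and only if there exist bounded operators X, Y on H such that T − A*TA = X P_{D_A} + P_{D_A} Y. -/
/-! If `P` is the orthogonal projection onto a closed subspace `K`, then `S = X P + P Y` for some
`X, Y` exactly when the compression of `S` to `Kᗮ` vanishes (take `X = (1 - P) S`, `Y = S`).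
For `K = D_A` one has `Kᗮ = ker (I - A*A)`, and on that kernel the compression of `T - A*TA` is
the form `⟪y, Tx⟫ - ⟪Ay, TAx⟫`. -/

noncomputable section

/-- The orthogonal projection of `H` onto the closure of the range of a bounded operator
`B : H →L[ℂ] H`, viewed as an operator on `H`. -/
def projClosureRange {H : Type*} [NormedAddCommGroup H] [InnerProductSpace ℂ H]
    [CompleteSpace H] (B : H →L[ℂ] H) : H →L[ℂ] H :=
  letI K0 : Submodule ℂ H := LinearMap.range (B : H →ₗ[ℂ] H)
  haveI : CompleteSpace K0.topologicalClosure :=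
    (Submodule.isClosed_topologicalClosure K0).completeSpace_coe
  K0.topologicalClosure.subtypeL.comp (Submodule.orthogonalProjection K0.topologicalClosure)

open ContinuousLinearMap Submodule
open scoped InnerProductSpace

section

variable {𝕜 H : Type*} [RCLike 𝕜] [NormedAddCommGroup H] [InnerProductSpace 𝕜 H]

theorem Submodule.exists_comp_starProjection_add_starProjection_comp_iff (K : Submodule 𝕜 H)
    [K.HasOrthogonalProjection] (S : H →L[𝕜] H) :
    (∃ X Y : H →L[𝕜] H, S = X ∘L K.starProjection + K.starProjection ∘L Y) ↔
      ∀ x ∈ Kᗮ, ∀ y ∈ Kᗮ, ⟪y, S x⟫_𝕜 = 0 := by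
  constructor
  · rintro ⟨X, Y, rfl⟩ x hx y hy
    simp [(starProjection_apply_eq_zero_iff K).2 hx, ← inner_starProjection_left_eq_right,
      (starProjection_apply_eq_zero_iff K).2 hy]
  · intro h
    refine ⟨(1 - K.starProjection) ∘L S, S, ContinuousLinearMap.ext fun x ↦ ?_⟩
    set w := x - K.starProjection x
    have hSw : S w ∈ K := by
      rw [← K.orthogonal_orthogonal]
      exact fun y hy ↦ h w (K.sub_starProjection_mem_orthogonal x) y hy
    have hPSw : K.starProjection (S w) = S w := K.starProjection_eq_self_iff.2 hSw
    simp only [w, map_sub] at hPSw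
    simp only [add_apply, comp_apply, sub_apply, one_apply_eq_self]
    -- `hPSw` says `(1 - P) S (1 - P) x = 0`, i.e. `S x = S P x - P S P x + P S x`
    linear_combination (norm := module) -hPSw

theorem ContinuousLinearMap.mem_orthogonal_closure_range_one_sub_adjoint_comp_self_iff
    [CompleteSpace H] (A : H →L[𝕜] H) (x : H) :
    x ∈ (LinearMap.range ((1 - adjoint A ∘L A : H →L[𝕜] H) : H →ₗ[𝕜] H)).topologicalClosureᗮ ↔
      adjoint A (A x) = x := by
  have hsa : adjoint (1 - adjoint A ∘L A) = 1 - adjoint A ∘L A := by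
    rw [map_sub, adjoint_one, adjoint_comp, adjoint_adjoint]
  rw [orthogonal_closure, orthogonal_range, hsa, LinearMap.mem_ker, coe_coe, sub_apply,
    one_apply_eq_self, comp_apply, sub_eq_zero, eq_comm]

end

theorem projClosureRange_eq_starProjection {H : Type*} [NormedAddCommGroup H]
    [InnerProductSpace ℂ H] [CompleteSpace H] (B : H →L[ℂ] H) :
    haveI : CompleteSpace (LinearMap.range (B : H →ₗ[ℂ] H)).topologicalClosure :=
      (isClosed_topologicalClosure _).completeSpace_coe
    projClosureRange B = (LinearMap.range (B : H →ₗ[ℂ] H)).topologicalClosure.starProjection :=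
  rfl

theorem stmt_2_general {H : Type*} [NormedAddCommGroup H] [InnerProductSpace ℂ H] [CompleteSpace H]
    (A T : H →L[ℂ] H) :
    (∀ x y : H, ContinuousLinearMap.adjoint A (A x) = x →
        ContinuousLinearMap.adjoint A (A y) = y →
        (inner ℂ y (T x) : ℂ) = inner ℂ (A y) (T (A x))) ↔
      ∃ X Y : H →L[ℂ] H,
        T - (ContinuousLinearMap.adjoint A).comp (T.comp A) =
          X.comp (projClosureRange (1 - (ContinuousLinearMap.adjoint A).comp A)) +
          (projClosureRange (1 - (ContinuousLinearMap.adjoint A).comp A)).comp Y := by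
  rw [projClosureRange_eq_starProjection, exists_comp_starProjection_add_starProjection_comp_iff]
  simp only [mem_orthogonal_closure_range_one_sub_adjoint_comp_self_iff, sub_apply, comp_apply,
    inner_sub_right, adjoint_inner_right, sub_eq_zero]
  exact ⟨fun h x hx y hy ↦ h x y hx hy, fun h x y hx hy ↦ h x hx y hy⟩

/-- Let `A` be a contraction on a complex Hilbert space `H`, and let `P_{D_A}` be the
orthogonal projection onto the defect space `D_A = closure (range (I - A*A))`.  A bounded
operator `T` satisfies `⟪Tx, y⟫ = ⟪TAx, Ay⟫` for all `x, y ∈ ker (I - A*A)` (i.e. `T` is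
`A`-invariant) if and only if there exist bounded operators `X, Y` on `H` with
`T - A*TA = X P_{D_A} + P_{D_A} Y`. -/
theorem stmt_2 {H : Type*} [NormedAddCommGroup H] [InnerProductSpace ℂ H] [CompleteSpace H]
    (A T : H →L[ℂ] H) (hA : ‖A‖ ≤ 1) :
    (∀ x y : H, ContinuousLinearMap.adjoint A (A x) = x →
        ContinuousLinearMap.adjoint A (A y) = y →
        (inner ℂ y (T x) : ℂ) = inner ℂ (A y) (T (A x))) ↔
      ∃ X Y : H →L[ℂ] H,
        T - (ContinuousLinearMap.adjoint A).comp (T.comp A) =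
          X.comp (projClosureRange (1 - (ContinuousLinearMap.adjoint A).comp A)) +
          (projClosureRange (1 - (ContinuousLinearMap.adjoint A).comp A)).comp Y :=
  stmt_2_general A T
end
end

section
/- Let A be a contraction on a Hilbert space H. A bounded operator T is A-invariant (meaning ⟨Tx, y⟩ = ⟨TAx, Ay⟩ for all x, y ∈ ker(I − A*A)) if and only if T is A*-invariant (meaning ⟨Tu, v⟩ = ⟨TA*u, A*v⟩ for all u, v ∈ ker(I − AA*)). -/
/-!
Since `A` maps the fixed points of `A* A` onto those of `A A*` with inverse `A*`, substituting
`x = A* u`, `y = A* v` turns one invariance condition into the other.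
-/

/-- With `B = A†`, this is the `A`-invariance of `T`: the fixed points of `A† A` form
`ker (I - A* A)`. -/
def IsInvariantAlong {𝕜 E : Type*} [Inner 𝕜 E] (A B T : E → E) : Prop :=
  ∀ x y, B (A x) = x → B (A y) = y → inner 𝕜 y (T x) = inner 𝕜 (A y) (T (A x))

theorem IsInvariantAlong.swap {𝕜 E : Type*} [Inner 𝕜 E] {A B T : E → E}
    (h : IsInvariantAlong (𝕜 := 𝕜) A B T) : IsInvariantAlong (𝕜 := 𝕜) B A T := by
  intro u v hu hv
  have key := h (B u) (B v) (by rw [hu]) (by rw [hv])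
  rw [hu, hv] at key
  exact key.symm

theorem stmt_3_general {H : Type*} [NormedAddCommGroup H] [InnerProductSpace ℂ H] [CompleteSpace H]
    (A T : H →L[ℂ] H) :
    (∀ x y : H, ContinuousLinearMap.adjoint A (A x) = x →
        ContinuousLinearMap.adjoint A (A y) = y →
        (inner ℂ y (T x) : ℂ) = inner ℂ (A y) (T (A x))) ↔
    (∀ u v : H, A (ContinuousLinearMap.adjoint A u) = u →
        A (ContinuousLinearMap.adjoint A v) = v →
        (inner ℂ v (T u) : ℂ) =
          inner ℂ (ContinuousLinearMap.adjoint A v) (T (ContinuousLinearMap.adjoint A u))) :=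
  ⟨IsInvariantAlong.swap (A := A) (B := ContinuousLinearMap.adjoint A) (T := T),
    IsInvariantAlong.swap (A := ContinuousLinearMap.adjoint A) (B := A) (T := T)⟩

/-- Let `A` be a contraction on a complex Hilbert space `H`.  A bounded operator `T` is
`A`-invariant (i.e. `⟪Tx, y⟫ = ⟪TAx, Ay⟫` for all `x, y ∈ ker (I - A*A)`) if and only if
`T` is `A*`-invariant (i.e. `⟪Tu, v⟫ = ⟪TA*u, A*v⟫` for all `u, v ∈ ker (I - AA*)`). -/
theorem stmt_3 {H : Type*} [NormedAddCommGroup H] [InnerProductSpace ℂ H] [CompleteSpace H]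
    (A T : H →L[ℂ] H) (hA : ‖A‖ ≤ 1) :
    (∀ x y : H, ContinuousLinearMap.adjoint A (A x) = x →
        ContinuousLinearMap.adjoint A (A y) = y →
        (inner ℂ y (T x) : ℂ) = inner ℂ (A y) (T (A x))) ↔
    (∀ u v : H, A (ContinuousLinearMap.adjoint A u) = u →
        A (ContinuousLinearMap.adjoint A v) = v →
        (inner ℂ v (T u) : ℂ) =
          inner ℂ (ContinuousLinearMap.adjoint A v) (T (ContinuousLinearMap.adjoint A u))) :=
  stmt_3_general A T
end

section
/- Let A be a contraction on a Hilbert space H such that I − A*A = k̃⊗k̃ and I − AA* = k⊗k for unit-norm-scaled vectors k, k̃ ∈ H (where (v⊗w)h = ⟨h,w⟩v). Then a bounded operator T on H is A-invariant if and only if there exist vectors v, w ∈ H such that T − ATA* = v⊗k + k⊗w. -/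
/-!
Put `S = T - A*TA`. On `ker (I - A*A) = k̃ᗮ` the invariance condition says exactly that the
compression of `S` to `k̃ᗮ` vanishes, i.e. `S = k̃ ⊗ a + b ⊗ k̃`. Since `AA* = I - k ⊗ k`,
`T - ATA* = KT + TK - KTK - ASA*` with `K = k ⊗ k`, and the intertwining
`A (I - A*A) = (I - AA*) A` forces `A k̃ ∈ ℂ k`, so every term has the form `v ⊗ k + k ⊗ w`.
Conversely, `A` maps `ker (I - A*A)` into `kᗮ`, on which `v ⊗ k` vanishes, so
`TAx = ATx + ⟨Ax, w⟩ k` for `x` in that kernel.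
-/

noncomputable section

/-- The rank-one operator `v ⊗ w : h ↦ ⟨h, w⟩ v` (inner product linear in `h`,
conjugate-linear in `w`, as in the paper). -/
def rankOne {H : Type*} [NormedAddCommGroup H] [InnerProductSpace ℂ H]
    (v w : H) : H →L[ℂ] H :=
  (innerSL ℂ w).smulRight v

open ContinuousLinearMap

section RankOne

variable {H : Type*} [NormedAddCommGroup H] [InnerProductSpace ℂ H]

lemma rankOne_apply (v w x : H) : rankOne v w x = inner ℂ w x • v := rfl

lemma mul_rankOne (X : H →L[ℂ] H) (v w : H) : X * rankOne v w = rankOne (X v) w :=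
  InnerProductSpace.comp_rankOne v w X

lemma rankOne_mul [CompleteSpace H] (v w : H) (X : H →L[ℂ] H) :
    rankOne v w * X = rankOne v (adjoint X w) :=
  InnerProductSpace.rankOne_comp v w X

lemma rankOne_smul_left (c : ℂ) (v w : H) : rankOne (c • v) w = c • rankOne v w := by
  ext x; simp [rankOne_apply, smul_comm c]

lemma rankOne_smul_right (c : ℂ) (v w : H) :
    rankOne v (c • w) = starRingEnd ℂ c • rankOne v w := by
  ext x; simp [rankOne_apply, smul_smul, mul_comm]

lemma rankOne_self_apply_eq_zero_iff (u x : H) : rankOne u u x = 0 ↔ inner ℂ u x = 0 := by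
  rw [rankOne_apply, smul_eq_zero, or_iff_left_of_imp]
  rintro rfl
  exact inner_zero_left x

lemma apply_eq_self_iff_inner_eq_zero {B : H →L[ℂ] H} {u : H} (h : 1 - B = rankOne u u)
    (x : H) : B x = x ↔ inner ℂ u x = 0 := by
  rw [← rankOne_self_apply_eq_zero_iff, ← h, sub_apply, one_apply_eq_self, sub_eq_zero, eq_comm]

lemma starProjection_singleton_eq_smul_rankOne (u : H) :
    (ℂ ∙ u).starProjection = ((‖u‖ ^ 2 : ℝ) : ℂ)⁻¹ • rankOne u u := by
  ext x
  simp [Submodule.starProjection_singleton, rankOne_apply, div_eq_inv_mul, smul_smul]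

def rankOneSum (k : H) : Submodule ℂ (H →L[ℂ] H) :=
  LinearMap.range ((InnerProductSpace.rankOne ℂ (E := H) (F := H)).flip k :
      H →ₗ[ℂ] H →L[ℂ] H) ⊔
    LinearMap.range (InnerProductSpace.rankOne ℂ (F := H) k : H →ₗ⋆[ℂ] H →L[ℂ] H)

lemma mem_rankOneSum_iff {k : H} {X : H →L[ℂ] H} :
    X ∈ rankOneSum k ↔ ∃ v w : H, X = rankOne v k + rankOne k w := by
  simp only [rankOneSum, Submodule.mem_sup, LinearMap.mem_range]
  constructor
  · rintro ⟨_, ⟨v, rfl⟩, _, ⟨w, rfl⟩, rfl⟩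
    exact ⟨v, w, rfl⟩
  · rintro ⟨v, w, rfl⟩
    exact ⟨_, ⟨v, rfl⟩, _, ⟨w, rfl⟩, rfl⟩

lemma rankOne_mem_rankOneSum_left (v k : H) : rankOne v k ∈ rankOneSum k :=
  Submodule.mem_sup_left ⟨v, rfl⟩

lemma rankOne_mem_rankOneSum_right (k w : H) : rankOne k w ∈ rankOneSum k :=
  Submodule.mem_sup_right ⟨w, rfl⟩

lemma mul_rankOne_mem_rankOneSum (X : H →L[ℂ] H) (v k : H) : X * rankOne v k ∈ rankOneSum k :=
  mul_rankOne X v k ▸ rankOne_mem_rankOneSum_left _ _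

lemma rankOne_mul_mem_rankOneSum [CompleteSpace H] (k w : H) (X : H →L[ℂ] H) :
    rankOne k w * X ∈ rankOneSum k :=
  rankOne_mul k w X ▸ rankOne_mem_rankOneSum_right _ _

theorem mem_rankOneSum_of_inner_eq_zero [CompleteSpace H] {S : H →L[ℂ] H} {u : H}
    (hS : ∀ x y, inner ℂ u x = 0 → inner ℂ u y = 0 → inner ℂ y (S x) = 0) :
    S ∈ rankOneSum u := by
  set Q := (ℂ ∙ u).starProjection
  set P := (ℂ ∙ u)ᗮ.starProjection
  have hP_inner : ∀ x, inner ℂ u (P x) = 0 := fun x =>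
    Submodule.mem_orthogonal_singleton_iff_inner_right.mp (Submodule.starProjection_apply_mem _ x)
  have hPSP : P * S * P = 0 := by
    ext x
    refine ext_inner_left ℂ fun y => ?_
    rw [mul_apply_eq_comp, mul_apply_eq_comp, ← Submodule.inner_starProjection_left_eq_right,
      zero_apply, inner_zero_right]
    exact hS _ _ (hP_inner x) (hP_inner y)
  have hP : P = 1 - Q := Submodule.starProjection_orthogonal' _
  have hdecomp : S = Q * S + S * Q - Q * S * Q :=
    calc S = Q * S + S * Q - Q * S * Q + P * S * P := by rw [hP]; noncomm_ring
      _ = Q * S + S * Q - Q * S * Q := by rw [hPSP, add_zero]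
  have hQ : Q = ((‖u‖ ^ 2 : ℝ) : ℂ)⁻¹ • rankOne u u := starProjection_singleton_eq_smul_rankOne u
  have hQ_mul : ∀ X, Q * X ∈ rankOneSum u := fun X => by
    rw [hQ, smul_mul_assoc]
    exact Submodule.smul_mem _ _ (rankOne_mul_mem_rankOneSum u u X)
  have hmul_Q : ∀ X, X * Q ∈ rankOneSum u := fun X => by
    rw [hQ, mul_smul_comm]
    exact Submodule.smul_mem _ _ (mul_rankOne_mem_rankOneSum X u u)
  rw [hdecomp]
  exact sub_mem (add_mem (hQ_mul S) (hmul_Q S)) (hmul_Q _)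

end RankOne

section Defect

variable {H : Type*} [NormedAddCommGroup H] [InnerProductSpace ℂ H] [CompleteSpace H]

lemma apply_mem_span_singleton_of_defect {A : H →L[ℂ] H} {u k : H}
    (hdef1 : 1 - adjoint A * A = rankOne u u) (hdef2 : 1 - A * adjoint A = rankOne k k) :
    A u ∈ ℂ ∙ k := by
  have hintertwine : rankOne (A u) u = rankOne k (adjoint A k) := by
    rw [← mul_rankOne, ← rankOne_mul, ← hdef1, ← hdef2]; noncomm_ring
  have h := congrArg (· u) hintertwine
  simp only [rankOne_apply] at h
  rcases eq_or_ne u 0 with rfl | hu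
  · simp
  · rw [← Submodule.smul_mem_iff _ (inner_self_ne_zero (𝕜 := ℂ).mpr hu), h]
    exact Submodule.smul_mem _ _ (Submodule.mem_span_singleton_self k)

lemma conj_mem_rankOneSum {A X : H →L[ℂ] H} {u k : H} (hX : X ∈ rankOneSum u)
    (hAu : A u ∈ ℂ ∙ k) : A * X * adjoint A ∈ rankOneSum k := by
  obtain ⟨v, w, rfl⟩ := mem_rankOneSum_iff.mp hX
  obtain ⟨μ, hμ⟩ := Submodule.mem_span_singleton.mp hAu
  rw [mul_add, add_mul, mul_rankOne, mul_rankOne, rankOne_mul, rankOne_mul, adjoint_adjoint, ← hμ,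
    rankOne_smul_left, rankOne_smul_right]
  exact add_mem (Submodule.smul_mem _ _ (rankOne_mem_rankOneSum_left _ _))
    (Submodule.smul_mem _ _ (rankOne_mem_rankOneSum_right _ _))

theorem sub_conj_mem_rankOneSum {A T : H →L[ℂ] H} {u k : H}
    (hdef1 : 1 - adjoint A * A = rankOne u u) (hdef2 : 1 - A * adjoint A = rankOne k k)
    (hT : T - adjoint A * T * A ∈ rankOneSum u) : T - A * T * adjoint A ∈ rankOneSum k := by
  set K := rankOne k k
  have hAA : A * adjoint A = 1 - K := by rw [← hdef2, sub_sub_cancel]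
  have key : T - A * T * adjoint A =
      K * T + T * K - K * T * K - A * (T - adjoint A * T * A) * adjoint A :=
    calc T - A * T * adjoint A = T - (A * adjoint A) * T * (A * adjoint A)
          - A * (T - adjoint A * T * A) * adjoint A := by noncomm_ring
      _ = _ := by rw [hAA]; noncomm_ring
  rw [key]
  exact sub_mem (sub_mem (add_mem (rankOne_mul_mem_rankOneSum k k T)
    (mul_rankOne_mem_rankOneSum T k k)) (mul_rankOne_mem_rankOneSum _ k k))
    (conj_mem_rankOneSum hT (apply_mem_span_singleton_of_defect hdef1 hdef2))

lemma inner_apply_eq_of_sub_conj_eq {A T : H →L[ℂ] H} {k v w x y : H}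
    (hdef2 : 1 - A * adjoint A = rankOne k k)
    (hT : T - A * T * adjoint A = rankOne v k + rankOne k w)
    (hx : adjoint A (A x) = x) (hy : adjoint A (A y) = y) :
    inner ℂ y (T x) = inner ℂ (A y) (T (A x)) := by
  have hker : ∀ z, adjoint A (A z) = z → inner ℂ k (A z) = 0 := fun z hz =>
    (apply_eq_self_iff_inner_eq_zero hdef2 (A z)).mp (congrArg A hz)
  have hTAx : T (A x) = A (T x) + inner ℂ w (A x) • k := by
    have h := congrArg (· (A x)) hT
    simp only [sub_apply, mul_apply_eq_comp, add_apply, rankOne_apply, hx, hker x hx, zero_smul,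
      zero_add] at h
    rw [← h]; abel
  rw [hTAx, inner_add_right, inner_smul_right, ← inner_conj_symm (A y) k, hker y hy, map_zero,
    mul_zero, add_zero, ← adjoint_inner_left A (T x) (A y), hy]

end Defect

theorem stmt_4_general {H : Type*} [NormedAddCommGroup H] [InnerProductSpace ℂ H] [CompleteSpace H]
    (A T : H →L[ℂ] H) (k ktilde : H)
    (hdef1 : (1 : H →L[ℂ] H) - (ContinuousLinearMap.adjoint A).comp A = rankOne ktilde ktilde)
    (hdef2 : (1 : H →L[ℂ] H) - A.comp (ContinuousLinearMap.adjoint A) = rankOne k k) :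
    (∀ x y : H, ContinuousLinearMap.adjoint A (A x) = x →
        ContinuousLinearMap.adjoint A (A y) = y →
        (inner ℂ y (T x) : ℂ) = inner ℂ (A y) (T (A x))) ↔
      ∃ v w : H,
        T - A.comp (T.comp (ContinuousLinearMap.adjoint A)) = rankOne v k + rankOne k w := by
  constructor
  · intro hinv
    have hker : ∀ x, adjoint A (A x) = x ↔ inner ℂ ktilde x = 0 :=
      apply_eq_self_iff_inner_eq_zero hdef1
    have hcompression : ∀ x y, inner ℂ ktilde x = 0 → inner ℂ ktilde y = 0 →
        inner ℂ y ((T - adjoint A * T * A) x) = 0 := by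
      intro x y hx hy
      rw [sub_apply, inner_sub_right, hinv x y ((hker x).mpr hx) ((hker y).mpr hy)]
      exact sub_eq_zero.mpr (adjoint_inner_right A y (T (A x))).symm
    exact mem_rankOneSum_iff.mp
      (sub_conj_mem_rankOneSum hdef1 hdef2 (mem_rankOneSum_of_inner_eq_zero hcompression))
  · rintro ⟨v, w, h⟩ x y hx hy
    exact inner_apply_eq_of_sub_conj_eq hdef2 h hx hy

/-- Let `A` be a contraction on a complex Hilbert space `H` whose defect operators are
rank one: `I - A*A = k̃ ⊗ k̃` and `I - AA* = k ⊗ k` for vectors `k, k̃ ∈ H`.  Then a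
bounded operator `T` on `H` is `A`-invariant (`⟪Tx, y⟫ = ⟪TAx, Ay⟫` for all
`x, y ∈ ker (I - A*A)`) if and only if there exist vectors `v, w ∈ H` such that
`T - ATA* = v ⊗ k + k ⊗ w`. -/
theorem stmt_4 {H : Type*} [NormedAddCommGroup H] [InnerProductSpace ℂ H] [CompleteSpace H]
    (A T : H →L[ℂ] H) (hA : ‖A‖ ≤ 1) (k ktilde : H)
    (hdef1 : (1 : H →L[ℂ] H) - (ContinuousLinearMap.adjoint A).comp A = rankOne ktilde ktilde)
    (hdef2 : (1 : H →L[ℂ] H) - A.comp (ContinuousLinearMap.adjoint A) = rankOne k k) :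
    (∀ x y : H, ContinuousLinearMap.adjoint A (A x) = x →
        ContinuousLinearMap.adjoint A (A y) = y →
        (inner ℂ y (T x) : ℂ) = inner ℂ (A y) (T (A x))) ↔
      ∃ v w : H,
        T - A.comp (T.comp (ContinuousLinearMap.adjoint A)) = rankOne v k + rankOne k w :=
  stmt_4_general A T k ktilde hdef1 hdef2
end
end

section
/- Let u be a measurable function on 𝕋 with |u| ≤ 1 a.e., Δ = (1−|u|²)^{1/2}, and let K = L² ⊕ closure(ΔL²). Define C(f⊕g) = (χ̄ u f̄ + χ̄ Δ ḡ) ⊕ (χ̄ Δ f̄ − χ̄ ū ḡ), where χ(ζ)=ζ. Then C is a conjugation on K (conjugate-linear isometric involution), and the multiplication operator U(f⊕g) = χf ⊕ χg satisfies CU = U*C. -/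
open MeasureTheory Complex

noncomputable section

instance : Fact (0 < 2 * Real.pi) := ⟨Real.two_pi_pos⟩

/-- The unit circle, realized as `ℝ / 2πℤ`. -/
abbrev Circ := AddCircle (2 * Real.pi)

/-- Normalized arclength (Haar probability) measure on the circle. -/
abbrev mC : Measure Circ := AddCircle.haarAddCircle

/-- The coordinate function `χ(ζ) = ζ` on the circle. -/
abbrev chi : Circ → ℂ := fun z => fourier 1 z

/-- For a function `d : 𝕋 → ℝ`, the closure in `L²(𝕋)` of `d · L²`. -/
def closDL2 (d : Circ → ℝ) : Set (Lp ℂ 2 mC) :=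
  closure {x : Lp ℂ 2 mC | ∃ h : Lp ℂ 2 mC, ⇑x =ᵐ[mC] fun z => (d z : ℂ) * h z}

/-! Pointwise, `C v = χ̄ · M v̄` with `M = [[u, Δ], [Δ, -ū]]`. Since `|u|² + Δ² = 1`, the matrix `M`
is unitary with `M⁻¹ = M̄`, and `|χ| = 1`; this gives `C² = 1` and `⟨Cv, Cw⟩ = ⟨w, v⟩` pointwise.

The only analytic point is that `C` preserves `closure(ΔL²)` in the second component. There
`C₂(f, g) = Δ χ̄ f̄ - conj (χ u g)`. The map `h ↦ conj (χ u h)` is continuous on `L²` and maps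
`ΔL²` into itself, hence also its closure. The remaining term `Δ χ̄ f̄ = C₂(f, g) + conj (χ u g)` is
square integrable and equals `Δ F` with `F = Δ⁻¹ Δ χ̄ f̄` measurable; truncating `F` at height `n`
exhibits it as an `L²`-limit of elements of `ΔL²`. -/

open Filter Topology ComplexConjugate
open scoped ENNReal

theorem MeasureTheory.MemLp.tendsto_eLpNorm_indicator_sub {α E : Type*} {m : MeasurableSpace α}
    {μ : Measure α} [IsFiniteMeasure μ] [NormedAddCommGroup E] {p : ℝ≥0∞} (hp1 : 1 ≤ p)
    (hp : p ≠ ∞) {A : α → E} (hA : MemLp A p μ) {s : ℕ → Set α}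
    (hs : ∀ n, MeasurableSet (s n)) (hmem : ∀ᵐ z ∂μ, ∀ᶠ n in atTop, z ∈ s n) :
    Tendsto (fun n => eLpNorm ((s n).indicator A - A) p μ) atTop (𝓝 0) := by
  refine tendsto_Lp_finite_of_tendsto_ae hp1 hp (fun n => hA.1.indicator (hs n)) hA ?_ ?_
  · intro ε hε
    obtain ⟨δ, hδ, hAδ⟩ := unifIntegrable_const hp1 hp hA hε
    refine ⟨δ, hδ, fun n t ht hμt => (eLpNorm_mono fun z => ?_).trans (hAδ 0 t ht hμt)⟩
    rw [Set.indicator_indicator]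
    exact norm_indicator_le_of_subset Set.inter_subset_left _ _
  · filter_upwards [hmem] with z hz
    exact tendsto_const_nhds.congr' (hz.mono fun n hn => (Set.indicator_of_mem hn A).symm)

theorem MeasureTheory.MemLp.integrable_inner {α 𝕜 : Type*} {m : MeasurableSpace α}
    {μ : Measure α} [RCLike 𝕜] {f g : α → 𝕜} (hf : MemLp f 2 μ) (hg : MemLp g 2 μ) :
    Integrable (fun z => inner 𝕜 (f z) (g z)) μ :=
  (hf.star.integrable_mul hg).congr (ae_of_all _ fun _ => (RCLike.inner_apply' _ _).symm)

section closDL2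

variable {d : Circ → ℝ}

lemma mem_closDL2_of_ae_eq_mul {x : Lp ℂ 2 mC} {F : Circ → ℂ}
    (hF : AEStronglyMeasurable F mC) (hx : ⇑x =ᵐ[mC] fun z => (d z : ℂ) * F z) :
    x ∈ closDL2 d := by
  set G := hF.mk F
  have hxG : ⇑x =ᵐ[mC] fun z => (d z : ℂ) * G z := by
    filter_upwards [hx, hF.ae_eq_mk] with z h1 h2
    rw [h1, h2]
  set s : ℕ → Set Circ := fun n => {z | ‖G z‖ ≤ n}
  have hs (n : ℕ) : MeasurableSet (s n) :=
    measurableSet_le hF.stronglyMeasurable_mk.measurable.norm measurable_const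
  have hGs (n : ℕ) : MemLp ((s n).indicator G) 2 mC :=
    MemLp.of_bound (hF.stronglyMeasurable_mk.indicator (hs n)).aestronglyMeasurable n
      (ae_of_all _ fun z => by
        rw [norm_indicator_eq_indicator_norm]
        exact Set.indicator_apply_le' id fun _ => n.cast_nonneg)
  have hxs (n : ℕ) : MemLp ((s n).indicator x) 2 mC := (Lp.memLp x).indicator (hs n)
  have htend : Tendsto (fun n => (hxs n).toLp _) atTop (𝓝 x) := by
    conv_rhs => rw [← Lp.toLp_coeFn x (Lp.memLp x)]
    exact (Lp.tendsto_Lp_iff_tendsto_eLpNorm'' _ hxs _ _).2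
      ((Lp.memLp x).tendsto_eLpNorm_indicator_sub one_le_two ENNReal.ofNat_ne_top hs
        (ae_of_all _ fun z => tendsto_natCast_atTop_atTop.eventually_ge_atTop ‖G z‖))
  refine mem_closure_of_tendsto htend (Eventually.of_forall fun n => ⟨(hGs n).toLp _, ?_⟩)
  filter_upwards [(hxs n).coeFn_toLp, (hGs n).coeFn_toLp, hxG] with z h1 h2 h3
  rw [h1, h2]
  by_cases hz : z ∈ s n <;> simp [hz, h3]

lemma sub_mem_closDL2 {x y : Lp ℂ 2 mC} (hx : x ∈ closDL2 d) (hy : y ∈ closDL2 d) :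
    x - y ∈ closDL2 d :=
  map_mem_closure₂ (f := fun a b : Lp ℂ 2 mC => a - b) continuous_sub hx hy
    fun v ⟨h, hv⟩ w ⟨k, hw⟩ => ⟨h - k, by
      filter_upwards [Lp.coeFn_sub v w, Lp.coeFn_sub h k, hv, hw] with z h1 h2 h3 h4
      rw [h1, h2, Pi.sub_apply, Pi.sub_apply, h3, h4, mul_sub]⟩

lemma mem_closDL2_of_ae_eq_conj_mul {m : Circ → ℂ} (hm : MemLp m ∞ mC) {x y : Lp ℂ 2 mC}
    (hx : x ∈ closDL2 d) (hy : ⇑y =ᵐ[mC] fun z => conj (m z * x z)) : y ∈ closDL2 d := by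
  set M : Lp ℂ ∞ mC := hm.toLp m
  set Φ : Lp ℂ 2 mC → Lp ℂ 2 mC := fun v =>
    isometry_conj.lipschitz.compLp (map_zero conj) (M • v : Lp ℂ 2 mC)
  have hΦ (v : Lp ℂ 2 mC) : ⇑(Φ v) =ᵐ[mC] fun z => conj (m z * v z) := by
    filter_upwards [isometry_conj.lipschitz.coeFn_compLp (map_zero conj) (M • v : Lp ℂ 2 mC),
      Lp.coeFn_lpSMul (r := 2) M v, hm.coeFn_toLp] with z h1 h2 h3
    rw [h1, Function.comp_apply, h2, Pi.smul_apply', h3, smul_eq_mul]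
  have hM : LipschitzWith ‖M‖₊ fun v : Lp ℂ 2 mC => (M • v : Lp ℂ 2 mC) := by
    refine LipschitzWith.of_dist_le_mul fun v w => ?_
    have hsub : (M • v : Lp ℂ 2 mC) - M • w = M • (v - w) := by
      rw [sub_eq_add_neg, sub_eq_add_neg, Lp.add_smul, Lp.smul_neg]
    rw [dist_eq_norm, dist_eq_norm, hsub, coe_nnnorm]
    exact Lp.norm_smul_le M (v - w)
  have hΦc : Continuous Φ := (LipschitzWith.continuous_compLp _ _).comp hM.continuous
  have hyΦ : y = Φ x := Lp.ext (hy.trans (hΦ x).symm)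
  refine hyΦ ▸ map_mem_closure hΦc hx fun v ⟨h, hv⟩ => ⟨Φ h, ?_⟩
  filter_upwards [hΦ v, hΦ h, hv] with z h1 h2 h3
  simp only [h1, h2, h3, map_mul, conj_ofReal]
  ring

end closDL2

lemma norm_chi (z : Circ) : ‖chi z‖ = 1 :=
  Circle.norm_coe _

lemma conj_chi_mul_chi (z : Circ) : conj (chi z) * chi z = 1 := by
  rw [← normSq_eq_conj_mul_self, normSq_eq_norm_sq, norm_chi, one_pow, ofReal_one]

lemma memLp_top_chi : MemLp chi ∞ mC :=
  memLp_top_of_bound (map_continuous (fourier 1)).aestronglyMeasurable 1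
    (ae_of_all _ fun z => (norm_chi z).le)

def defect (u : Circ → ℂ) (z : Circ) : ℝ := Real.sqrt (1 - ‖u z‖ ^ 2)

/-- `conjFst u` and `conjSnd u` are the two components of the paper's conjugation `C`, with
`Δ = defect u`. -/
def conjFst (u f g : Circ → ℂ) (z : Circ) : ℂ :=
  conj (chi z) * (u z * conj (f z) + (defect u z : ℂ) * conj (g z))

def conjSnd (u f g : Circ → ℂ) (z : Circ) : ℂ :=
  conj (chi z) * ((defect u z : ℂ) * conj (f z) - conj (u z) * conj (g z))

section Conjugation

variable {u : Circ → ℂ}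

lemma mul_conj_add_defect_mul_self {z : Circ} (hz : ‖u z‖ ≤ 1) :
    u z * conj (u z) + (defect u z : ℂ) * defect u z = 1 := by
  rw [mul_conj, ← ofReal_mul, defect, Real.mul_self_sqrt (by nlinarith [norm_nonneg (u z)]),
    normSq_eq_norm_sq]
  push_cast
  ring

lemma memLp_top_defect (hum : AEStronglyMeasurable u mC) :
    MemLp (fun z => (defect u z : ℂ)) ∞ mC := by
  refine memLp_top_of_bound ?_ 1 (ae_of_all _ fun z => ?_)
  · exact ((hum.norm.aemeasurable.pow_const 2).const_sub 1).sqrt.complex_ofReal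
      |>.aestronglyMeasurable
  · rw [norm_real, defect, Real.norm_of_nonneg (Real.sqrt_nonneg _)]
    exact Real.sqrt_le_one.mpr (by nlinarith [norm_nonneg (u z)])

section Involution

variable (hu1 : ∀ᵐ z ∂mC, ‖u z‖ ≤ 1) (f g : Circ → ℂ)
include hu1

lemma conjFst_conjFst_conjSnd : conjFst u (conjFst u f g) (conjSnd u f g) =ᵐ[mC] f := by
  filter_upwards [hu1] with z hz
  simp only [conjFst, conjSnd, map_add, map_sub, map_mul, conj_conj, conj_ofReal]
  linear_combination (u z * conj (u z) + (defect u z : ℂ) * defect u z) * f z *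
      conj_chi_mul_chi z + f z * mul_conj_add_defect_mul_self hz

lemma conjSnd_conjFst_conjSnd : conjSnd u (conjFst u f g) (conjSnd u f g) =ᵐ[mC] g := by
  filter_upwards [hu1] with z hz
  simp only [conjFst, conjSnd, map_add, map_sub, map_mul, conj_conj, conj_ofReal]
  linear_combination (u z * conj (u z) + (defect u z : ℂ) * defect u z) * g z *
      conj_chi_mul_chi z + g z * mul_conj_add_defect_mul_self hz

end Involution

variable (hum : AEStronglyMeasurable u mC) (hu1 : ∀ᵐ z ∂mC, ‖u z‖ ≤ 1)
include hum hu1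

lemma memLp_conjFst {f g : Circ → ℂ} (hf : MemLp f 2 mC) (hg : MemLp g 2 mC) :
    MemLp (conjFst u f g) 2 mC :=
  ((hf.star.mul' (r := 2) (memLp_top_of_bound hum 1 hu1)).add
    (hg.star.mul' (r := 2) (memLp_top_defect hum))).mul' (r := 2) memLp_top_chi.star

lemma memLp_conjSnd {f g : Circ → ℂ} (hf : MemLp f 2 mC) (hg : MemLp g 2 mC) :
    MemLp (conjSnd u f g) 2 mC :=
  ((hf.star.mul' (r := 2) (memLp_top_defect hum)).sub
    (hg.star.mul' (r := 2) (memLp_top_of_bound hum 1 hu1).star)).mul' (r := 2)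
    memLp_top_chi.star

lemma integral_inner_conjFst_add_integral_inner_conjSnd {f g f' g' : Circ → ℂ}
    (hf : MemLp f 2 mC) (hg : MemLp g 2 mC) (hf' : MemLp f' 2 mC) (hg' : MemLp g' 2 mC) :
    (∫ z, inner ℂ (conjFst u f g z) (conjFst u f' g' z) ∂mC) +
        ∫ z, inner ℂ (conjSnd u f g z) (conjSnd u f' g' z) ∂mC =
      (∫ z, inner ℂ (f' z) (f z) ∂mC) + ∫ z, inner ℂ (g' z) (g z) ∂mC := by
  rw [← integral_add ((memLp_conjFst hum hu1 hf hg).integrable_inner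
      (memLp_conjFst hum hu1 hf' hg'))
      ((memLp_conjSnd hum hu1 hf hg).integrable_inner (memLp_conjSnd hum hu1 hf' hg')),
    ← integral_add (hf'.integrable_inner hf) (hg'.integrable_inner hg)]
  refine integral_congr_ae ?_
  filter_upwards [hu1] with z hz
  simp only [conjFst, conjSnd, RCLike.inner_apply', map_add, map_sub, map_mul, conj_conj,
    conj_ofReal]
  linear_combination (u z * conj (u z) + (defect u z : ℂ) * defect u z) *
      (f z * conj (f' z) + g z * conj (g' z)) * conj_chi_mul_chi z +
    (f z * conj (f' z) + g z * conj (g' z)) * mul_conj_add_defect_mul_self hz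

lemma conjSnd_mem_closDL2 {f g : Circ → ℂ} (hg : MemLp g 2 mC) (hC : MemLp (conjSnd u f g) 2 mC)
    (hmem : hg.toLp g ∈ closDL2 (defect u)) :
    hC.toLp (conjSnd u f g) ∈ closDL2 (defect u) := by
  have hm : MemLp (fun z => chi z * u z) ∞ mC :=
    (memLp_top_of_bound hum 1 hu1).mul' memLp_top_chi
  have hB : MemLp (star fun z => chi z * u z * g z) 2 mC := (hg.mul' (r := 2) hm).star
  set B := hB.toLp _
  have hBmem : B ∈ closDL2 (defect u) := by
    refine mem_closDL2_of_ae_eq_conj_mul hm hmem ?_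
    filter_upwards [hB.coeFn_toLp, hg.coeFn_toLp] with z h1 h2
    rw [h1, h2]
    rfl
  set x := hC.toLp (conjSnd u f g) + B
  have hx : ∀ᵐ z ∂mC, x z = defect u z * (conj (chi z) * conj (f z)) := by
    filter_upwards [Lp.coeFn_add (hC.toLp _) B, hC.coeFn_toLp, hB.coeFn_toLp] with z h1 h2 h3
    rw [h1, Pi.add_apply, h2, h3, conjSnd, Pi.star_apply, star_def, map_mul, map_mul]
    ring
  have hxmem : x ∈ closDL2 (defect u) := by
    refine mem_closDL2_of_ae_eq_mul (F := fun z => (defect u z : ℂ)⁻¹ * x z)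
      ((memLp_top_defect hum).1.aemeasurable.inv.aestronglyMeasurable.mul
        (Lp.aestronglyMeasurable x)) ?_
    filter_upwards [hx] with z hz
    rcases eq_or_ne (defect u z : ℂ) 0 with h | h
    · rw [hz, h, zero_mul, zero_mul]
    · rw [mul_inv_cancel_left₀ h]
  simpa [x] using sub_mem_closDL2 hxmem hBmem

end Conjugation

/-- Let `u` be measurable on `𝕋` with `|u| ≤ 1` a.e., `Δ = (1 - |u|²)^{1/2}`, and let
`K = L² ⊕ closure(ΔL²)`.  Define
`C(f ⊕ g) = (χ̄ u f̄ + χ̄ Δ ḡ) ⊕ (χ̄ Δ f̄ - χ̄ ū ḡ)`.  Then `C` is a conjugation on `K`: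
it is conjugate-linear, maps `K` into `K` (it maps `L² × L²` into itself and preserves
the second-component subspace `closure(ΔL²)`), satisfies `⟨Cx, Cy⟩ = ⟨y, x⟩`, is an
involution a.e., and the bilateral shift `U(f ⊕ g) = χf ⊕ χg` satisfies `CU = U*C`. -/
theorem stmt_11 (u : Circ → ℂ) (hum : AEStronglyMeasurable u mC)
    (hu1 : ∀ᵐ z ∂mC, ‖u z‖ ≤ 1) :
    letI Δ : Circ → ℝ := fun z => Real.sqrt (1 - ‖u z‖ ^ 2)
    letI C1 : (Circ → ℂ) → (Circ → ℂ) → (Circ → ℂ) := fun f g z =>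
      (starRingEnd ℂ) (chi z) * (u z * (starRingEnd ℂ) (f z) +
        (Δ z : ℂ) * (starRingEnd ℂ) (g z))
    letI C2 : (Circ → ℂ) → (Circ → ℂ) → (Circ → ℂ) := fun f g z =>
      (starRingEnd ℂ) (chi z) * ((Δ z : ℂ) * (starRingEnd ℂ) (f z) -
        (starRingEnd ℂ) (u z) * (starRingEnd ℂ) (g z))
    -- `C` maps `L² × L²` into itself
    (∀ f g : Circ → ℂ, MemLp f 2 mC → MemLp g 2 mC →
      MemLp (C1 f g) 2 mC ∧ MemLp (C2 f g) 2 mC) ∧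
    -- conjugate-linearity (pointwise)
    (∀ f g f' g' : Circ → ℂ, ∀ z,
      C1 (f + f') (g + g') z = C1 f g z + C1 f' g' z ∧
      C2 (f + f') (g + g') z = C2 f g z + C2 f' g' z) ∧
    (∀ (c : ℂ) (f g : Circ → ℂ) (z),
      C1 (c • f) (c • g) z = (starRingEnd ℂ) c * C1 f g z ∧
      C2 (c • f) (c • g) z = (starRingEnd ℂ) c * C2 f g z) ∧
    -- isometric: `⟨C(f⊕g), C(f'⊕g')⟩ = ⟨f'⊕g', f⊕g⟩`
    (∀ f g f' g' : Circ → ℂ, MemLp f 2 mC → MemLp g 2 mC →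
      MemLp f' 2 mC → MemLp g' 2 mC →
      (∫ z, (inner ℂ (C1 f g z) (C1 f' g' z) : ℂ) ∂mC) +
        (∫ z, (inner ℂ (C2 f g z) (C2 f' g' z) : ℂ) ∂mC) =
      (∫ z, (inner ℂ (f' z) (f z) : ℂ) ∂mC) + (∫ z, (inner ℂ (g' z) (g z) : ℂ) ∂mC)) ∧
    -- involution (a.e.)
    (∀ f g : Circ → ℂ, MemLp f 2 mC → MemLp g 2 mC →
      C1 (C1 f g) (C2 f g) =ᵐ[mC] f ∧ C2 (C1 f g) (C2 f g) =ᵐ[mC] g) ∧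
    -- `C` preserves the subspace `closure(ΔL²)` in the second component
    (∀ f g : Circ → ℂ, ∀ (hg : MemLp g 2 mC) (hC2 : MemLp (C2 f g) 2 mC),
      hg.toLp g ∈ closDL2 Δ → hC2.toLp (C2 f g) ∈ closDL2 Δ) ∧
    -- `C U = U* C`, where `U(f⊕g) = χf ⊕ χg`
    (∀ f g : Circ → ℂ, ∀ z,
      C1 (fun w => chi w * f w) (fun w => chi w * g w) z =
        (starRingEnd ℂ) (chi z) * C1 f g z ∧
      C2 (fun w => chi w * f w) (fun w => chi w * g w) z =
        (starRingEnd ℂ) (chi z) * C2 f g z) := by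
  refine ⟨fun f g hf hg => ⟨memLp_conjFst hum hu1 hf hg, memLp_conjSnd hum hu1 hf hg⟩,
    fun f g f' g' z => ⟨?_, ?_⟩, fun c f g z => ⟨?_, ?_⟩,
    fun f g f' g' hf hg hf' hg' =>
      integral_inner_conjFst_add_integral_inner_conjSnd hum hu1 hf hg hf' hg',
    fun f g _ _ => ⟨conjFst_conjFst_conjSnd hu1 f g, conjSnd_conjFst_conjSnd hu1 f g⟩,
    fun f g hg hC => conjSnd_mem_closDL2 hum hu1 hg hC, fun f g z => ⟨?_, ?_⟩⟩
  all_goals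
    simp only [Pi.add_apply, Pi.smul_apply, smul_eq_mul, map_add, map_mul]
    ring
end
end

section
/- Let g₁, g₂ ∈ L²(𝕋) with g₁ ∈ (H²)^⊥ and g₂ ∈ (H²)^⊥, let u ∈ H^∞ with |u(0)| < 1, and suppose g₁(1 − u(0)·ū) = conj(g₂)·(1 − conj(u(0))·u) almost everywhere on 𝕋. Then g₁ = g₂ = 0. -/
/-!
Put `c = û 0` and `h = 1 - conj c * u`, an `H^∞` function with `ĥ 0 = 1 - |c|² ≠ 0`; the
hypothesis reads `g₁ * conj h = conj (g₂ * conj h)`. Each `gᵢ * conj h` has spectrum in the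
negative integers, so the left side lives on `n < 0` and the right side on `n > 0`: both products
vanish. If some `ĝᵢ` were nonzero, at its greatest nonzero index `N` we would get
`0 = (gᵢ * conj h)^(N) = conj (ĥ 0) * ĝᵢ N ≠ 0`.
-/

open MeasureTheory Complex

noncomputable section

open AddCircle ComplexConjugate

section FourierCoefficients

variable {T : ℝ} [Fact (0 < T)]

theorem fourierCoeff_sub {f g : AddCircle T → ℂ} (hf : Integrable f haarAddCircle)
    (hg : Integrable g haarAddCircle) :
    fourierCoeff (f - g) = fourierCoeff f - fourierCoeff g := by
  ext n
  simp only [fourierCoeff, Pi.sub_apply, smul_sub]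
  exact integral_sub (hf.fourier_smul _) (hg.fourier_smul _)

theorem fourierCoeff_conj (f : AddCircle T → ℂ) (n : ℤ) :
    fourierCoeff (fun t => conj (f t)) n = conj (fourierCoeff f (-n)) := by
  simp only [fourierCoeff, ← integral_conj, smul_eq_mul, map_mul, ← fourier_neg, neg_neg]

theorem fourierCoeff_mul_fourier (f : AddCircle T → ℂ) (m n : ℤ) :
    fourierCoeff (fun t => f t * fourier m t) n = fourierCoeff f (n - m) := by
  refine integral_congr_ae (ae_of_all _ fun t => ?_)
  have : fourier (-(n - m)) t = fourier (-n) t * fourier m t := by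
    rw [← fourier_add, neg_sub, sub_eq_neg_add]
  simp only [smul_eq_mul, this]
  ring

theorem fourierCoeff_one_sub_const_mul {u : AddCircle T → ℂ} (hu : Integrable u haarAddCircle)
    (c : ℂ) (n : ℤ) :
    fourierCoeff (fun t => 1 - c * u t) n
      = (Pi.single 0 1 : ℤ → ℂ) n - c * fourierCoeff u n := by
  have hone : (fun _ => 1 : AddCircle T → ℂ) = fourier 0 := funext fun _ => fourier_zero.symm
  rw [show (fun t => 1 - c * u t) = (fun _ => 1) - fun t => c * u t from rfl,
    fourierCoeff_sub (integrable_const 1) (hu.const_mul c), Pi.sub_apply, hone,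
    fourierCoeff_fourier, fourierCoeff.const_mul]

theorem ae_eq_zero_of_fourierCoeff_eq_zero {f : AddCircle T → ℂ} (hf : MemLp f 2 haarAddCircle)
    (hf0 : ∀ n, fourierCoeff f n = 0) : f =ᵐ[haarAddCircle] 0 := by
  have hL : hf.toLp f = 0 := by
    have := hasSum_fourier_series_L2 (hf.toLp f)
    simp only [fourierCoeff_congr_ae hf.coeFn_toLp, hf0, zero_smul] at this
    exact this.unique hasSum_zero
  exact hf.coeFn_toLp.symm.trans (hL ▸ Lp.coeFn_zero ℂ 2 haarAddCircle)

theorem integral_conj_mul_eq_tsum_fourierCoeff {f g : AddCircle T → ℂ}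
    (hf : MemLp f 2 haarAddCircle) (hg : MemLp g 2 haarAddCircle) :
    ∫ t, conj (g t) * f t ∂haarAddCircle
      = ∑' n, conj (fourierCoeff g n) * fourierCoeff f n := by
  calc ∫ t, conj (g t) * f t ∂haarAddCircle
      = inner ℂ (hg.toLp g) (hf.toLp f) := by
        rw [L2.inner_def]
        refine integral_congr_ae ?_
        filter_upwards [hf.coeFn_toLp, hg.coeFn_toLp] with t hft hgt
        rw [hft, hgt, RCLike.inner_apply, mul_comm]
    _ = inner ℂ (fourierBasis.repr (hg.toLp g)) (fourierBasis.repr (hf.toLp f)) :=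
        (fourierBasis.repr.inner_map_map _ _).symm
    _ = ∑' n, conj (fourierCoeff g n) * fourierCoeff f n := by
        simp only [lp.inner_eq_tsum, RCLike.inner_apply, fourierBasis_repr, mul_comm,
          fourierCoeff_congr_ae hf.coeFn_toLp, fourierCoeff_congr_ae hg.coeFn_toLp]

theorem fourierCoeff_mul_conj {f h : AddCircle T → ℂ} (hf : MemLp f 2 haarAddCircle)
    (hh : MemLp h ⊤ haarAddCircle) (n : ℤ) :
    fourierCoeff (fun t => f t * conj (h t)) n
      = ∑' k, conj (fourierCoeff h (k - n)) * fourierCoeff f k := by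
  have hhn : MemLp (fun t => h t * fourier n t) 2 haarAddCircle := by
    refine (hh.mono_exponent le_top).of_le
      ((hh.1.mul (map_continuous (fourier n)).aestronglyMeasurable)) (ae_of_all _ fun t => ?_)
    rw [norm_mul, fourier_apply, Circle.norm_coe, mul_one]
  calc fourierCoeff (fun t => f t * conj (h t)) n
      = ∫ t, conj (h t * fourier n t) * f t ∂haarAddCircle :=
        integral_congr_ae <| ae_of_all _ fun t => by
          simp only [smul_eq_mul, map_mul, fourier_neg]
          ring
    _ = ∑' k, conj (fourierCoeff h (k - n)) * fourierCoeff f k := by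
        simp only [integral_conj_mul_eq_tsum_fourierCoeff hf hhn, fourierCoeff_mul_fourier]

theorem fourierCoeff_mul_conj_of_forall_gt {f h : AddCircle T → ℂ}
    (hf : MemLp f 2 haarAddCircle) (hh : MemLp h ⊤ haarAddCircle)
    (hh_neg : ∀ k < 0, fourierCoeff h k = 0) {N : ℤ} (hf_gt : ∀ k > N, fourierCoeff f k = 0) :
    fourierCoeff (fun t => f t * conj (h t)) N = conj (fourierCoeff h 0) * fourierCoeff f N := by
  rw [fourierCoeff_mul_conj hf hh, tsum_eq_single N, sub_self]
  intro k hk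
  rcases hk.lt_or_gt with hlt | hgt
  · rw [hh_neg _ (by omega), map_zero, zero_mul]
  · rw [hf_gt k hgt, mul_zero]

theorem fourierCoeff_mul_conj_eq_zero_of_nonneg {f h : AddCircle T → ℂ}
    (hf : MemLp f 2 haarAddCircle) (hf_nonneg : ∀ n ≥ 0, fourierCoeff f n = 0)
    (hh : MemLp h ⊤ haarAddCircle) (hh_neg : ∀ n < 0, fourierCoeff h n = 0) :
    ∀ n ≥ 0, fourierCoeff (fun t => f t * conj (h t)) n = 0 := fun n hn => by
  rw [fourierCoeff_mul_conj_of_forall_gt hf hh hh_neg fun k hk => hf_nonneg k (by omega),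
    hf_nonneg n hn, mul_zero]

theorem ae_eq_zero_of_fourierCoeff_mul_conj_eq_zero {f h : AddCircle T → ℂ}
    (hf : MemLp f 2 haarAddCircle) (hf_nonneg : ∀ n ≥ 0, fourierCoeff f n = 0)
    (hh : MemLp h ⊤ haarAddCircle) (hh_neg : ∀ n < 0, fourierCoeff h n = 0)
    (hh0 : fourierCoeff h 0 ≠ 0) (hfh : ∀ n, fourierCoeff (fun t => f t * conj (h t)) n = 0) :
    f =ᵐ[haarAddCircle] 0 := by
  refine ae_eq_zero_of_fourierCoeff_eq_zero hf fun n => ?_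
  by_contra hn
  obtain ⟨N, hN, hN_max⟩ := Int.exists_greatest_of_bdd (P := fun k => fourierCoeff f k ≠ 0)
    ⟨0, fun k hk => by by_contra; exact hk (hf_nonneg k (by omega))⟩ ⟨n, hn⟩
  have hf_gt : ∀ k > N, fourierCoeff f k = 0 := fun k hk => by
    by_contra hk'
    exact (hN_max k hk').not_gt hk
  have := fourierCoeff_mul_conj_of_forall_gt hf hh hh_neg hf_gt
  rw [hfh N, eq_comm, mul_eq_zero, map_eq_zero] at this
  exact this.elim hh0 hN

theorem fourierCoeff_eq_zero_of_ae_eq_conj {f g : AddCircle T → ℂ}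
    (hfg : f =ᵐ[haarAddCircle] fun t => conj (g t)) (hf : ∀ n ≥ 0, fourierCoeff f n = 0)
    (hg : ∀ n ≥ 0, fourierCoeff g n = 0) (n : ℤ) : fourierCoeff f n = 0 := by
  rcases le_or_gt 0 n with hn | hn
  · exact hf n hn
  · rw [fourierCoeff_congr_ae hfg, fourierCoeff_conj, hg (-n) (by omega), map_zero]

end FourierCoefficients

/-- Let `g₁, g₂ ∈ L²(𝕋)` belong to `(H²)^⊥` (all nonnegative Fourier coefficients
vanish), let `u ∈ H^∞` (bounded, with vanishing negative Fourier coefficients) with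
`|u(0)| < 1` (where `u(0) = fourierCoeff u 0`), and suppose
`g₁ (1 - u(0) ū) = conj g₂ (1 - conj (u(0)) u)` almost everywhere.  Then `g₁ = g₂ = 0`
(almost everywhere). -/
theorem stmt_17 (g₁ g₂ u : Circ → ℂ)
    (hg₁ : MemLp g₁ 2 mC) (hg₂ : MemLp g₂ 2 mC)
    (hg₁perp : ∀ n : ℤ, 0 ≤ n → fourierCoeff g₁ n = 0)
    (hg₂perp : ∀ n : ℤ, 0 ≤ n → fourierCoeff g₂ n = 0)
    (hu : MemLp u ⊤ mC)
    (huH : ∀ n : ℤ, n < 0 → fourierCoeff u n = 0)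
    (hu0 : ‖fourierCoeff u 0‖ < 1)
    (heq : ∀ᵐ z ∂mC,
      g₁ z * (1 - fourierCoeff u 0 * (starRingEnd ℂ) (u z)) =
        (starRingEnd ℂ) (g₂ z) * (1 - (starRingEnd ℂ) (fourierCoeff u 0) * u z)) :
    g₁ =ᵐ[mC] 0 ∧ g₂ =ᵐ[mC] 0 := by
  set c := fourierCoeff u 0
  set h : Circ → ℂ := fun z => 1 - conj c * u z
  have hh : MemLp h ⊤ mC := (memLp_const 1).sub (hu.const_mul _)
  have hh_coeff := fourierCoeff_one_sub_const_mul (hu.integrable le_top) (conj c)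
  have hh_neg : ∀ n < 0, fourierCoeff h n = 0 := fun n hn => by
    rw [hh_coeff, Pi.single_apply, if_neg hn.ne, huH n hn, mul_zero, sub_zero]
  have hh0 : fourierCoeff h 0 ≠ 0 := by
    have hc : normSq c < 1 := by
      rw [normSq_eq_norm_sq]
      nlinarith [norm_nonneg c]
    rw [hh_coeff, Pi.single_eq_same, mul_comm, mul_conj, sub_ne_zero]
    exact_mod_cast hc.ne'
  have hF₁₂ : (fun z => g₁ z * conj (h z)) =ᵐ[mC] fun z => conj (g₂ z * conj (h z)) :=
    heq.mono fun z hz => by simpa [h, c] using hz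
  have hF₂₁ : (fun z => g₂ z * conj (h z)) =ᵐ[mC] fun z => conj (g₁ z * conj (h z)) :=
    hF₁₂.mono fun z hz => by simp [hz]
  have hF₁ := fourierCoeff_mul_conj_eq_zero_of_nonneg hg₁ hg₁perp hh hh_neg
  have hF₂ := fourierCoeff_mul_conj_eq_zero_of_nonneg hg₂ hg₂perp hh hh_neg
  exact ⟨ae_eq_zero_of_fourierCoeff_mul_conj_eq_zero hg₁ hg₁perp hh hh_neg hh0
      (fourierCoeff_eq_zero_of_ae_eq_conj hF₁₂ hF₁ hF₂),
    ae_eq_zero_of_fourierCoeff_mul_conj_eq_zero hg₂ hg₂perp hh hh_neg hh0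
      (fourierCoeff_eq_zero_of_ae_eq_conj hF₂₁ hF₂ hF₁)⟩
end
end
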